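/- Let F be an anti-invariant Riemannian submersion from a Sasakian manifold with φ(ker F_*) = (ker F_*)^⊥. Then (ker F_*)^⊥ defines a totally geodesic foliation on M if and only if A_X φY = 0 for all horizontal vector fields X, Y. -/

import Mathlib

/-- Algebraic model of a Riemannian submersion `F : (M,g_M) → (N,g_N)`:
`Fn` plays the role of smooth functions on `M`, `VF` of vector fields on `M`,
`g` is the metric, `der` the directional derivative, `nabla` the Levi-Civita
connection, `bracket` the Lie bracket, and `vert`/`horiz` the projections onto
the vertical distribution `ker F_*` and the horizontal distribution
`(ker F_*)^⊥` determined by the fibers of the submersion. -/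
structure RiemannianSubmersionData (Fn VF : Type) [CommRing Fn] [Algebra ℝ Fn]
    [AddCommGroup VF] [Module Fn VF] where
  g : VF → VF → Fn
  g_symm : ∀ X Y, g X Y = g Y X
  g_add_left : ∀ X Y Z, g (X + Y) Z = g X Z + g Y Z
  g_smul_left : ∀ (f : Fn) (X Y : VF), g (f • X) Y = f * g X Y
  g_nondeg : ∀ X, (∀ Y, g X Y = 0) → X = 0
  der : VF → Fn → Fn
  der_add : ∀ X f₁ f₂, der X (f₁ + f₂) = der X f₁ + der X f₂
  der_mul : ∀ X f₁ f₂, der X (f₁ * f₂) = f₁ * der X f₂ + f₂ * der X f₁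
  bracket : VF → VF → VF
  nabla : VF → VF → VF
  nabla_add_left : ∀ X Y Z, nabla (X + Y) Z = nabla X Z + nabla Y Z
  nabla_add_right : ∀ X Y Z, nabla X (Y + Z) = nabla X Y + nabla X Z
  nabla_smul_left : ∀ (f : Fn) (X Y : VF), nabla (f • X) Y = f • nabla X Y
  nabla_smul_right : ∀ (f : Fn) (X Y : VF),
    nabla X (f • Y) = f • nabla X Y + der X f • Y
  torsion_free : ∀ X Y, nabla X Y - nabla Y X = bracket X Y
  compat : ∀ X Y Z, der X (g Y Z) = g (nabla X Y) Z + g Y (nabla X Z)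
  vert : VF → VF
  horiz : VF → VF
  vert_add : ∀ X Y, vert (X + Y) = vert X + vert Y
  vert_smul : ∀ (f : Fn) (X : VF), vert (f • X) = f • vert X
  horiz_add : ∀ X Y, horiz (X + Y) = horiz X + horiz Y
  horiz_smul : ∀ (f : Fn) (X : VF), horiz (f • X) = f • horiz X
  vert_add_horiz : ∀ X, vert X + horiz X = X
  vert_vert : ∀ X, vert (vert X) = vert X
  vert_horiz : ∀ X, vert (horiz X) = 0
  horiz_vert : ∀ X, horiz (vert X) = 0
  g_vert_horiz : ∀ X Y, g (vert X) (horiz Y) = 0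
  vert_bracket : ∀ X Y, vert X = X → vert Y = Y → vert (bracket X Y) = bracket X Y

namespace RiemannianSubmersionData

variable {Fn VF : Type} [CommRing Fn] [Algebra ℝ Fn] [AddCommGroup VF] [Module Fn VF]

/-- O'Neill tensor `T_E F = H∇_{VE}(VF) + V∇_{VE}(HF)`. -/
def T (S : RiemannianSubmersionData Fn VF) (E F : VF) : VF :=
  S.horiz (S.nabla (S.vert E) (S.vert F)) + S.vert (S.nabla (S.vert E) (S.horiz F))

/-- O'Neill tensor `A_E F = V∇_{HE}(HF) + H∇_{HE}(VF)`. -/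
def A (S : RiemannianSubmersionData Fn VF) (E F : VF) : VF :=
  S.vert (S.nabla (S.horiz E) (S.horiz F)) + S.horiz (S.nabla (S.horiz E) (S.vert F))

end RiemannianSubmersionData

/-- A Riemannian submersion from a Sasakian manifold `M(φ,ξ,η,g)` onto a
Riemannian manifold: the total space carries an almost contact metric structure
`(phi, xi, eta, g)` satisfying the Sasakian condition
`(∇_X φ)Y = g(X,Y)ξ - η(Y)X` (and hence `R(ξ,X)Y = g(X,Y)ξ - η(Y)X`). -/
structure SasakianSubmersionData (Fn VF : Type) [CommRing Fn] [Algebra ℝ Fn]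
    [AddCommGroup VF] [Module Fn VF] extends RiemannianSubmersionData Fn VF where
  phi : VF → VF
  xi : VF
  eta : VF → Fn
  phi_add : ∀ X Y, phi (X + Y) = phi X + phi Y
  phi_smul : ∀ (f : Fn) (X : VF), phi (f • X) = f • phi X
  eta_add : ∀ X Y, eta (X + Y) = eta X + eta Y
  eta_smul : ∀ (f : Fn) (X : VF), eta (f • X) = f * eta X
  phi_phi : ∀ X, phi (phi X) = -X + eta X • xi
  phi_xi : phi xi = 0
  eta_phi : ∀ X, eta (phi X) = 0
  eta_xi : eta xi = 1
  g_phi : ∀ X Y, g (phi X) (phi Y) = g X Y - eta X * eta Y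
  eta_g : ∀ X, eta X = g X xi
  sasaki : ∀ X Y, nabla X (phi Y) - phi (nabla X Y) = g X Y • xi - eta Y • X
  curv_xi : ∀ X Y, nabla xi (nabla X Y) - nabla X (nabla xi Y)
      - nabla (bracket xi X) Y = g X Y • xi - eta Y • X

namespace SasakianSubmersionData

variable {Fn VF : Type} [CommRing Fn] [Algebra ℝ Fn] [AddCommGroup VF] [Module Fn VF]

/-- Vertical part `BX` of `φX` for horizontal `X`. -/
def B (S : SasakianSubmersionData Fn VF) (X : VF) : VF := S.vert (S.phi X)

/-- Horizontal (`μ`-)part `CX` of `φX` for horizontal `X`. -/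
def C (S : SasakianSubmersionData Fn VF) (X : VF) : VF := S.horiz (S.phi X)

/-- O'Neill tensor `T`. -/
def T (S : SasakianSubmersionData Fn VF) : VF → VF → VF :=
  S.toRiemannianSubmersionData.T

/-- O'Neill tensor `A`. -/
def A (S : SasakianSubmersionData Fn VF) : VF → VF → VF :=
  S.toRiemannianSubmersionData.A

/-- `F` is anti-invariant: `φ(ker F_*) ⊆ (ker F_*)^⊥`. -/
def AntiInvariant (S : SasakianSubmersionData Fn VF) : Prop :=
  ∀ U, S.vert U = U → S.horiz (S.phi U) = S.phi U

end SasakianSubmersionData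
/-!
For horizontal `X, Y`, the Sasakian identity `∇_X φY = φ∇_X Y + g(X,Y)ξ` and the facts that `φ`
sends horizontal fields to vertical ones and vertical fields to horizontal ones give
`A_X φY = H∇_X φY = φ(V∇_X Y)`. Hence `A_X φY = 0` iff `φ(V∇_X Y) = 0`, and since
`φ² = -1 + η ⊗ ξ` this says `V∇_X Y = 0` once `η(∇_X Y) = -g(Y, ∇_X ξ)` vanishes; it does,
because `φ∇_X ξ = X` makes `g(∇_X ξ, Y) = g(X, φY)`, and `φY` is vertical.
-/

namespace RiemannianSubmersionData

variable {Fn VF : Type} [CommRing Fn] [Algebra ℝ Fn] [AddCommGroup VF] [Module Fn VF]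
  (S : RiemannianSubmersionData Fn VF)

lemma nabla_zero_right (X : VF) : S.nabla X 0 = 0 :=
  (AddMonoidHom.mk' (S.nabla X) (S.nabla_add_right X)).map_zero

lemma der_zero (X : VF) : S.der X 0 = 0 :=
  (AddMonoidHom.mk' (S.der X) (S.der_add X)).map_zero

lemma vert_zero : S.vert 0 = 0 :=
  (AddMonoidHom.mk' S.vert S.vert_add).map_zero

lemma g_add_right (X Y Z : VF) : S.g X (Y + Z) = S.g X Y + S.g X Z := by
  rw [S.g_symm, S.g_add_left, S.g_symm Y, S.g_symm Z]

lemma g_eq_zero_of_horiz_of_vert {X U : VF} (hX : S.horiz X = X) (hU : S.vert U = U) :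
    S.g X U = 0 := by
  rw [S.g_symm, ← hU, ← hX, S.g_vert_horiz]

lemma horiz_eq_zero_of_vert {U : VF} (hU : S.vert U = U) : S.horiz U = 0 := by
  rw [← hU, S.horiz_vert]

lemma horiz_eq_self_iff_vert_eq_zero {X : VF} : S.horiz X = X ↔ S.vert X = 0 := by
  constructor
  · intro hX
    rw [← hX, S.vert_horiz]
  · intro hX
    conv_rhs => rw [← S.vert_add_horiz X, hX, zero_add]

lemma horiz_horiz (X : VF) : S.horiz (S.horiz X) = S.horiz X :=
  S.horiz_eq_self_iff_vert_eq_zero.mpr (S.vert_horiz X)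

lemma g_horiz_comm (X Y : VF) : S.g (S.horiz X) Y = S.g X (S.horiz Y) := by
  conv_lhs => rw [← S.vert_add_horiz Y]
  conv_rhs => rw [← S.vert_add_horiz X]
  rw [S.g_add_right, S.g_add_left, S.g_symm, S.g_vert_horiz, S.g_vert_horiz]

lemma g_vert_comm (X Y : VF) : S.g (S.vert X) Y = S.g X (S.vert Y) := by
  conv_lhs => rw [← S.vert_add_horiz Y]
  conv_rhs => rw [← S.vert_add_horiz X]
  rw [S.g_add_right, S.g_add_left, S.g_vert_horiz, S.g_symm (S.horiz X), S.g_vert_horiz]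

lemma A_of_horiz_of_vert {X U : VF} (hX : S.horiz X = X) (hU : S.vert U = U) :
    S.A X U = S.horiz (S.nabla X U) := by
  rw [A, hX, hU, S.horiz_eq_zero_of_vert hU, S.nabla_zero_right, S.vert_zero, zero_add]

end RiemannianSubmersionData

namespace SasakianSubmersionData

variable {Fn VF : Type} [CommRing Fn] [Algebra ℝ Fn] [AddCommGroup VF] [Module Fn VF]
  (S : SasakianSubmersionData Fn VF)

lemma phi_zero : S.phi 0 = 0 :=
  (AddMonoidHom.mk' S.phi S.phi_add).map_zero

lemma eq_zero_of_phi_eq_zero {X : VF} (hφ : S.phi X = 0) (hη : S.eta X = 0) : X = 0 := by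
  simpa [hφ, hη, S.phi_zero] using (S.phi_phi X).symm

lemma phi_nabla_xi (X : VF) : S.phi (S.nabla X S.xi) = X - S.eta X • S.xi := by
  have h := S.sasaki X S.xi
  rw [S.phi_xi, S.nabla_zero_right, S.eta_xi, one_smul, ← S.eta_g] at h
  rw [← neg_sub, ← h, zero_sub, neg_neg]

lemma eta_eq_zero_of_horiz (hxi : S.vert S.xi = S.xi) {X : VF} (hX : S.horiz X = X) :
    S.eta X = 0 := by
  rw [S.eta_g, S.g_eq_zero_of_horiz_of_vert hX hxi]

lemma eta_vert (hxi : S.vert S.xi = S.xi) (X : VF) : S.eta (S.vert X) = S.eta X := by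
  rw [S.eta_g, S.eta_g, S.g_vert_comm, hxi]

variable (hxi : S.vert S.xi = S.xi)
  (heq : ∀ X, S.horiz X = X → ∃ U, S.vert U = U ∧ S.phi U = X)
include hxi heq

/-- Every horizontal field is some `φU` with `U` vertical, and `g(φX, φU) = g(X, U) = 0`. -/
lemma horiz_phi_eq_zero_of_horiz {X : VF} (hX : S.horiz X = X) : S.horiz (S.phi X) = 0 := by
  refine S.g_nondeg _ fun W => ?_
  obtain ⟨U, hU, hφU⟩ := heq (S.horiz W) (S.horiz_horiz W)
  rw [S.g_horiz_comm, ← hφU, S.g_phi, S.g_eq_zero_of_horiz_of_vert hX hU,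
    S.eta_eq_zero_of_horiz hxi hX, zero_mul, sub_zero]

lemma vert_phi_of_horiz {X : VF} (hX : S.horiz X = X) : S.vert (S.phi X) = S.phi X := by
  simpa [S.horiz_phi_eq_zero_of_horiz hxi heq hX] using S.vert_add_horiz (S.phi X)

lemma g_nabla_xi_eq_zero_of_horiz {X Y : VF} (hX : S.horiz X = X) (hY : S.horiz Y = Y) :
    S.g (S.nabla X S.xi) Y = 0 := by
  have h := S.g_phi (S.nabla X S.xi) Y
  rw [S.phi_nabla_xi, S.eta_eq_zero_of_horiz hxi hX, S.eta_eq_zero_of_horiz hxi hY, zero_smul,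
    sub_zero, mul_zero, sub_zero, S.g_eq_zero_of_horiz_of_vert hX (S.vert_phi_of_horiz hxi heq hY)]
    at h
  exact h.symm

lemma eta_nabla_eq_zero_of_horiz {X Y : VF} (hX : S.horiz X = X) (hY : S.horiz Y = Y) :
    S.eta (S.nabla X Y) = 0 := by
  have h := S.compat X Y S.xi
  rw [← S.eta_g, S.eta_eq_zero_of_horiz hxi hY, S.der_zero, S.g_symm Y,
    S.g_nabla_xi_eq_zero_of_horiz hxi heq hX hY, add_zero, ← S.eta_g] at h
  exact h.symm

lemma A_phi_of_horiz (hanti : S.AntiInvariant) {X Y : VF} (hX : S.horiz X = X)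
    (hY : S.horiz Y = Y) : S.A X (S.phi Y) = S.phi (S.vert (S.nabla X Y)) := by
  have hsasaki := S.sasaki X Y
  rw [S.eta_eq_zero_of_horiz hxi hY, zero_smul, sub_zero, sub_eq_iff_eq_add] at hsasaki
  rw [A, S.A_of_horiz_of_vert hX (S.vert_phi_of_horiz hxi heq hY), hsasaki, S.horiz_add,
    S.horiz_smul, S.horiz_eq_zero_of_vert hxi, smul_zero, zero_add,
    ← S.vert_add_horiz (S.nabla X Y), S.phi_add, S.horiz_add, hanti _ (S.vert_vert _),
    S.horiz_phi_eq_zero_of_horiz hxi heq (S.horiz_horiz _), add_zero, S.vert_add_horiz]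

end SasakianSubmersionData

open SasakianSubmersionData in
/-- Corollary 2: for an anti-invariant Riemannian submersion from a Sasakian
manifold with `φ(ker F_*) = (ker F_*)^⊥`, the horizontal distribution
`(ker F_*)^⊥` defines a totally geodesic foliation on `M` iff `A_X φY = 0`
for all horizontal `X, Y`. -/
theorem horizontal_totally_geodesic_iff {Fn VF : Type} [CommRing Fn]
    [Algebra ℝ Fn] [AddCommGroup VF] [Module Fn VF]
    (S : SasakianSubmersionData Fn VF)
    (hxi : S.vert S.xi = S.xi)
    (hanti : S.AntiInvariant)
    (heq : ∀ X, S.horiz X = X → ∃ U, S.vert U = U ∧ S.phi U = X) :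
    (∀ X Y, S.horiz X = X → S.horiz Y = Y →
        S.horiz (S.nabla X Y) = S.nabla X Y) ↔
      (∀ X Y, S.horiz X = X → S.horiz Y = Y → S.A X (S.phi Y) = 0) := by
  simp only [S.horiz_eq_self_iff_vert_eq_zero (X := S.nabla _ _)]
  refine forall₄_congr fun X Y hX hY => ?_
  rw [S.A_phi_of_horiz hxi heq hanti hX hY]
  constructor
  · intro hV
    rw [hV, S.phi_zero]
  · intro hφV
    refine S.eq_zero_of_phi_eq_zero hφV ?_
    rw [S.eta_vert hxi, S.eta_nabla_eq_zero_of_horiz hxi heq hX hY]
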